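/- Let p, q > 1 be real numbers with p + q = 2*_k and p > 2*_k/2 > q. There exists a constant C > 0, depending only on n, k and p, such that for all μ₁, μ₂ > 0 and all ξ₁, ξ₂ ∈ ℝⁿ one has ∫_{ℝⁿ} U_{μ₁,ξ₁}^{p} U_{μ₂,ξ₂}^{q} dx ≤ C · ε₁₂^{q}. -/

import Mathlib

open MeasureTheory Real

/-- The constant `𝔠_{n,k} := (∏_{j=-k}^{k-1} (n+2j))^{1/k}` (reindexed by `j ↦ j - k`). -/
noncomputable def cnk (n k : ℕ) : ℝ :=
  (∏ j ∈ Finset.range (2 * k), ((n : ℝ) + 2 * j - 2 * k)) ^ ((k : ℝ)⁻¹)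

/-- The standard bubble `U_{μ,ξ}(x) = μ^{(n-2k)/2} (μ² + 𝔠_{n,k}⁻¹ |x-ξ|²)^{(2k-n)/2}`. -/
noncomputable def stdBubble (n k : ℕ) (μ : ℝ) (ξ x : EuclideanSpace ℝ (Fin n)) : ℝ :=
  μ ^ (((n : ℝ) - 2 * k) / 2) *
    (μ ^ 2 + (cnk n k)⁻¹ * ‖x - ξ‖ ^ 2) ^ (((2 * k : ℝ) - n) / 2)

/-- The interaction quantity
`ε₁₂ = (μ₁/μ₂ + μ₂/μ₁ + 𝔠_{n,k}⁻¹ |ξ₁-ξ₂|²/(μ₁μ₂))^{(2k-n)/2}`. -/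
noncomputable def interact (n k : ℕ) (μ₁ μ₂ : ℝ)
    (ξ₁ ξ₂ : EuclideanSpace ℝ (Fin n)) : ℝ :=
  (μ₁ / μ₂ + μ₂ / μ₁ + (cnk n k)⁻¹ * ‖ξ₁ - ξ₂‖ ^ 2 / (μ₁ * μ₂)) ^ (((2 * k : ℝ) - n) / 2)

/-!
The substitution `x = ξ₂ + √𝔠 μ₁ y` turns the integral into
`𝔠^{n/2} λ^b ∫ (1 + |y - η|²)^{-a} (λ² + |y|²)^{-b} dy` with `λ = μ₂/μ₁`, `a = (n-2k)p/2`,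
`b = (n-2k)q/2`, so that `a + b = n` and `2b < n < 2a`; moreover `λ⁻¹ (1 + λ² + |η|²)` is exactly
the quantity whose power `-(n-2k)/2` is `ε₁₂`. It therefore suffices to bound the last integral
by `C N^{-b}`, `N = 1 + λ² + |η|²`. Where `λ² + |y|² ≥ N/4` the second factor is at most
`(N/4)^{-b}` and the first is integrable because `2a > n`. Elsewhere `|y|² < N/4`, which forces
`1 + |y - η|² ≥ N/4`; there the integrand is at most `(N/4)^{-a} |y|^{-2b}`, whose integral over
the ball of radius `√(N/4)` is a multiple of `N^{-a + (n-2b)/2} = N^{-n/2} ≤ N^{-b}` since `2b < n`.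
-/

open Metric Module Set

theorem rpow_neg_mul_rpow_neg_le_add_indicator {E : Type*} [NormedAddCommGroup E]
    {a b l t : ℝ} {y η : E} (ha : 0 ≤ a) (hb : 0 ≤ b) (ht : 0 < t)
    (htη : 4 * t ≤ 1 + l ^ 2 + ‖η‖ ^ 2) (hy : y ≠ 0) :
    (1 + ‖y - η‖ ^ 2) ^ (-a) * (l ^ 2 + ‖y‖ ^ 2) ^ (-b) ≤
      t ^ (-b) * (1 + ‖y - η‖ ^ 2) ^ (-a) +
        (ball 0 √t).indicator (fun z => t ^ (-a) * ‖z‖ ^ (-(2 * b))) y := by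
  by_cases hyt : t ≤ l ^ 2 + ‖y‖ ^ 2
  · have hsmall : (l ^ 2 + ‖y‖ ^ 2) ^ (-b) ≤ t ^ (-b) :=
      rpow_le_rpow_of_nonpos ht hyt (by linarith)
    rw [mul_comm (t ^ (-b))]
    exact le_add_of_le_of_nonneg (by gcongr) (indicator_nonneg (fun z _ => by positivity) y)
  · rw [not_le] at hyt
    have hy_ball : y ∈ ball (0 : E) √t := by
      rw [mem_ball_zero_iff, lt_sqrt (norm_nonneg y)]
      nlinarith
    have hfar : t ≤ 1 + ‖y - η‖ ^ 2 := by
      have := norm_le_norm_add_norm_sub y η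
      nlinarith [sq_nonneg (‖y‖ - ‖y - η‖), norm_nonneg η]
    have hsing : (l ^ 2 + ‖y‖ ^ 2) ^ (-b) ≤ ‖y‖ ^ (-(2 * b)) := by
      rw [neg_mul_eq_mul_neg, rpow_mul (norm_nonneg y), rpow_two]
      exact rpow_le_rpow_of_nonpos (by positivity) (by nlinarith) (by linarith)
    rw [indicator_of_mem hy_ball]
    refine le_add_of_nonneg_of_le (by positivity) ?_
    exact mul_le_mul (rpow_le_rpow_of_nonpos ht hfar (by linarith)) hsing (by positivity)
      (by positivity)

section AddHaar

variable {E : Type*} [NormedAddCommGroup E] [NormedSpace ℝ E] [FiniteDimensional ℝ E]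
  [MeasurableSpace E] [BorelSpace E] (μ : Measure E) [μ.IsAddHaarMeasure]

theorem integral_comp_add_smul {r : ℝ} (hr : 0 < r) (f : E → ℝ) (x₀ : E) :
    ∫ x, f x ∂μ = r ^ finrank ℝ E * ∫ y, f (x₀ + r • y) ∂μ := by
  rw [Measure.integral_comp_smul_of_nonneg μ (fun z => f (x₀ + z)) r (hR := hr.le),
    integral_add_left_eq_self, smul_eq_mul, ← mul_assoc,
    mul_inv_cancel₀ (pow_pos hr _).ne', one_mul]

theorem setIntegral_ball_norm_rpow (s : ℝ) {R : ℝ} (hR : 0 < R) :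
    ∫ x in ball (0 : E) R, ‖x‖ ^ s ∂μ =
      R ^ (finrank ℝ E + s) * ∫ x in ball (0 : E) 1, ‖x‖ ^ s ∂μ := by
  have h := Measure.setIntegral_comp_smul_of_pos μ (fun x : E => ‖x‖ ^ s) (ball 0 1) hR
  simp only [smul_unitBall_of_pos hR, norm_smul, norm_of_nonneg hR.le,
    mul_rpow hR.le (norm_nonneg _), integral_const_mul, smul_eq_mul] at h
  rw [rpow_add hR, rpow_natCast, mul_assoc, h, ← mul_assoc,
    mul_inv_cancel₀ (pow_pos hR _).ne', one_mul]

theorem integrableOn_ball_norm_rpow_neg {s : ℝ} (hs : s < finrank ℝ E) (hd : 1 ≤ finrank ℝ E)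
    (R : ℝ) :
    IntegrableOn (fun x : E => ‖x‖ ^ (-s)) (ball 0 R) μ :=
  integrableOn_ball_of_norm_le_rpow hd hs
    (ae_of_all _ fun x => by rw [one_mul, norm_of_nonneg (rpow_nonneg (norm_nonneg x) _)])
    (by fun_prop : Measurable fun x : E => ‖x‖ ^ (-s)).aestronglyMeasurable

theorem exists_integral_rpow_neg_mul_rpow_neg_le {a b : ℝ} (hb : 0 < b)
    (hab : a + b = finrank ℝ E) (h2b : 2 * b < finrank ℝ E) :
    ∃ C, 0 < C ∧ ∀ (l : ℝ) (η : E),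
      ∫ y, (1 + ‖y - η‖ ^ 2) ^ (-a) * (l ^ 2 + ‖y‖ ^ 2) ^ (-b) ∂μ ≤
        C * (1 + l ^ 2 + ‖η‖ ^ 2) ^ (-b) := by
  set d := finrank ℝ E
  have hd : 1 ≤ d := by exact_mod_cast (show (0 : ℝ) < d by linarith)
  have : Nontrivial E := Module.nontrivial_of_finrank_pos (R := ℝ) hd
  have hint : Integrable (fun y : E => (1 + ‖y‖ ^ 2) ^ (-a)) μ := by
    simpa [neg_div, mul_div_cancel_left₀] using
      integrable_rpow_neg_one_add_norm_sq (μ := μ) (r := 2 * a) (by linarith)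
  set A := ∫ y, (1 + ‖y‖ ^ 2) ^ (-a) ∂μ
  set K := ∫ y in ball (0 : E) 1, ‖y‖ ^ (-(2 * b)) ∂μ
  have hA : 0 ≤ A := integral_nonneg fun y => by positivity
  have hK : 0 ≤ K := setIntegral_nonneg measurableSet_ball fun y _ => by positivity
  refine ⟨4 ^ b * A + 4 ^ ((d : ℝ) / 2) * K + 1, by positivity, fun l η => ?_⟩
  set N := 1 + l ^ 2 + ‖η‖ ^ 2
  have hN : 1 ≤ N := by nlinarith [sq_nonneg l, sq_nonneg ‖η‖]
  set t := N / 4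
  have ht : 0 < t := by positivity
  have hquarter (e : ℝ) : t ^ (-e) = 4 ^ e * N ^ (-e) := by
    rw [div_rpow (by positivity) (by norm_num), rpow_neg (by norm_num : (0 : ℝ) ≤ 4),
      div_inv_eq_mul, mul_comm]
  have hI₁ : Integrable (fun y => t ^ (-b) * (1 + ‖y - η‖ ^ 2) ^ (-a)) μ :=
    (hint.comp_sub_right η).const_mul _
  have hI₂ : Integrable ((ball 0 √t).indicator fun z : E => t ^ (-a) * ‖z‖ ^ (-(2 * b))) μ :=
    (integrable_indicator_iff measurableSet_ball).2 <|
      (integrableOn_ball_norm_rpow_neg μ (by linarith) hd _).const_mul _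
  have hpt : ∀ᵐ y ∂μ, (1 + ‖y - η‖ ^ 2) ^ (-a) * (l ^ 2 + ‖y‖ ^ 2) ^ (-b) ≤
      t ^ (-b) * (1 + ‖y - η‖ ^ 2) ^ (-a) +
        (ball 0 √t).indicator (fun z : E => t ^ (-a) * ‖z‖ ^ (-(2 * b))) y := by
    filter_upwards [μ.ae_ne 0] with y hy
    exact rpow_neg_mul_rpow_neg_le_add_indicator (by linarith) hb.le ht
      (mul_div_cancel₀ N four_ne_zero).le hy
  have hsing : t ^ (-a) * √t ^ (d + -(2 * b)) = t ^ (-((d : ℝ) / 2)) := by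
    rw [sqrt_eq_rpow, ← rpow_mul ht.le, ← rpow_add ht]
    congr 1
    linarith
  have hdecay : N ^ (-((d : ℝ) / 2)) ≤ N ^ (-b) := rpow_le_rpow_of_exponent_le hN (by linarith)
  calc ∫ y, (1 + ‖y - η‖ ^ 2) ^ (-a) * (l ^ 2 + ‖y‖ ^ 2) ^ (-b) ∂μ
      ≤ t ^ (-b) * A + t ^ (-a) * (√t ^ (d + -(2 * b)) * K) := by
        refine (integral_mono_of_nonneg (ae_of_all _ fun y => by positivity) (hI₁.add hI₂)
          hpt).trans_eq ?_
        rw [integral_add' hI₁ hI₂, integral_const_mul,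
          integral_sub_right_eq_self (fun y => (1 + ‖y‖ ^ 2) ^ (-a)) η,
          integral_indicator measurableSet_ball, integral_const_mul,
          setIntegral_ball_norm_rpow μ _ (sqrt_pos.2 ht)]
    _ = 4 ^ b * A * N ^ (-b) + 4 ^ ((d : ℝ) / 2) * K * N ^ (-((d : ℝ) / 2)) := by
        rw [← mul_assoc, hsing, hquarter, hquarter]
        ring
    _ ≤ (4 ^ b * A + 4 ^ ((d : ℝ) / 2) * K + 1) * N ^ (-b) := by
        nlinarith [mul_le_mul_of_nonneg_left hdecay (by positivity : 0 ≤ 4 ^ ((d : ℝ) / 2) * K),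
          (by positivity : 0 < N ^ (-b))]

end AddHaar

theorem half_sub_mul_add_half_sub_mul_eq {n k p q : ℝ} (hnk : 2 * k < n)
    (hpq : p + q = 2 * n / (n - 2 * k)) : (n - 2 * k) / 2 * p + (n - 2 * k) / 2 * q = n := by
  rw [← mul_add, hpq]
  field_simp [(sub_pos.2 hnk).ne']

theorem two_mul_half_sub_mul_lt {n k q : ℝ} (hnk : 2 * k < n) (hq : q < n / (n - 2 * k)) :
    2 * ((n - 2 * k) / 2 * q) < n := by
  have hgap : 0 < n - 2 * k := sub_pos.2 hnk
  calc 2 * ((n - 2 * k) / 2 * q) = (n - 2 * k) * q := by ring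
    _ < (n - 2 * k) * (n / (n - 2 * k)) := mul_lt_mul_of_pos_left hq hgap
    _ = n := mul_div_cancel₀ n hgap.ne'

theorem cnk_pos {n k : ℕ} (hn : 2 * k < n) : 0 < cnk n k := by
  refine rpow_pos_of_pos (Finset.prod_pos fun j _ => ?_) _
  have : (2 * k : ℝ) < n := by exact_mod_cast hn
  linarith [j.cast_nonneg (α := ℝ)]

section Bubble

variable {n k : ℕ} {μ ν : ℝ}

theorem stdBubble_add_smul_rpow (hc : 0 < cnk n k) (hμ : 0 < μ) (hν : 0 < ν) (p : ℝ)
    (ξ ξ₀ y : EuclideanSpace ℝ (Fin n)) :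
    stdBubble n k μ ξ (ξ₀ + (√(cnk n k) * ν) • y) ^ p =
      ν ^ (-((n - 2 * k) / 2 * p)) * (μ / ν) ^ ((n - 2 * k) / 2 * p) *
        ((μ / ν) ^ 2 + ‖y - (√(cnk n k) * ν)⁻¹ • (ξ - ξ₀)‖ ^ 2) ^ (-((n - 2 * k) / 2 * p)) := by
  set r := √(cnk n k) * ν
  have hr : 0 < r := by positivity
  have hscale : μ ^ 2 + (cnk n k)⁻¹ * ‖ξ₀ + r • y - ξ‖ ^ 2 =
      ν ^ 2 * ((μ / ν) ^ 2 + ‖y - r⁻¹ • (ξ - ξ₀)‖ ^ 2) := by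
    have hsub : ξ₀ + r • y - ξ = r • (y - r⁻¹ • (ξ - ξ₀)) := by
      rw [smul_sub, smul_inv_smul₀ hr.ne']
      abel
    rw [hsub, norm_smul, norm_of_nonneg hr.le, mul_pow, mul_pow, sq_sqrt hc.le, mul_assoc,
      inv_mul_cancel_left₀ hc.ne', div_pow, mul_add, mul_div_cancel₀ _ (pow_ne_zero 2 hν.ne')]
  have hexp : ((2 * k : ℝ) - n) / 2 = -((n - 2 * k) / 2) := by ring
  set α : ℝ := (n - 2 * k) / 2
  set X := (μ / ν) ^ 2 + ‖y - r⁻¹ • (ξ - ξ₀)‖ ^ 2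
  have hX : 0 < X := by positivity
  have hν2 : (ν ^ 2) ^ (-(α * p)) = ν ^ (-(α * p)) * (ν ^ (α * p))⁻¹ := by
    rw [← rpow_natCast, ← rpow_mul hν.le, ← rpow_neg hν.le, ← rpow_add hν]
    ring_nf
  rw [stdBubble, hscale, hexp, mul_rpow (by positivity) (by positivity), ← rpow_mul hμ.le,
    ← rpow_mul (by positivity), neg_mul, mul_rpow (by positivity) hX.le, hν2,
    div_rpow hμ.le hν.le]
  ring

theorem interact_rpow_eq (hc : 0 < cnk n k) (hμ : 0 < μ) (hν : 0 < ν) (q : ℝ)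
    (ξ₁ ξ₂ : EuclideanSpace ℝ (Fin n)) :
    interact n k μ ν ξ₁ ξ₂ ^ q = (ν / μ) ^ ((n - 2 * k) / 2 * q) *
      (1 + (ν / μ) ^ 2 + ‖(√(cnk n k) * μ)⁻¹ • (ξ₁ - ξ₂)‖ ^ 2) ^ (-((n - 2 * k) / 2 * q)) := by
  set S := μ / ν + ν / μ + (cnk n k)⁻¹ * ‖ξ₁ - ξ₂‖ ^ 2 / (μ * ν)
  have hS : 0 < S := by positivity
  have hN : 1 + (ν / μ) ^ 2 + ‖(√(cnk n k) * μ)⁻¹ • (ξ₁ - ξ₂)‖ ^ 2 = ν / μ * S := by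
    simp only [S]
    rw [norm_smul, norm_inv, norm_of_nonneg (by positivity), mul_pow, inv_pow, mul_pow,
      sq_sqrt hc.le]
    field_simp
  rw [interact, ← rpow_mul hS.le, hN, mul_rpow (by positivity) hS.le, ← mul_assoc,
    ← rpow_add (by positivity), add_neg_cancel, rpow_zero, one_mul]
  congr 1
  ring

theorem integral_stdBubble_rpow_mul_stdBubble_rpow (hc : 0 < cnk n k) {p q : ℝ}
    (hpq : (n - 2 * k) / 2 * p + (n - 2 * k) / 2 * q = n) {μ₁ μ₂ : ℝ} (hμ₁ : 0 < μ₁)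
    (hμ₂ : 0 < μ₂) (ξ₁ ξ₂ : EuclideanSpace ℝ (Fin n)) :
    ∫ x, stdBubble n k μ₁ ξ₁ x ^ p * stdBubble n k μ₂ ξ₂ x ^ q =
      cnk n k ^ ((n : ℝ) / 2) * ((μ₂ / μ₁) ^ ((n - 2 * k) / 2 * q) *
        ∫ y, (1 + ‖y - (√(cnk n k) * μ₁)⁻¹ • (ξ₁ - ξ₂)‖ ^ 2) ^ (-((n - 2 * k) / 2 * p)) *
          ((μ₂ / μ₁) ^ 2 + ‖y‖ ^ 2) ^ (-((n - 2 * k) / 2 * q))) := by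
  set α : ℝ := (n - 2 * k) / 2
  set r := √(cnk n k) * μ₁
  have hscale : r ^ n * (μ₁ ^ (-(α * p)) * μ₁ ^ (-(α * q))) = cnk n k ^ ((n : ℝ) / 2) := by
    rw [← rpow_add hμ₁, ← neg_add, hpq, mul_pow, mul_assoc, ← rpow_natCast μ₁,
      ← rpow_add hμ₁, add_neg_cancel, rpow_zero, mul_one, sqrt_eq_rpow, ← rpow_natCast,
      ← rpow_mul hc.le, one_div_mul_eq_div]
  have hchange := integral_comp_add_smul volume (by positivity : 0 < r)
    (fun x => stdBubble n k μ₁ ξ₁ x ^ p * stdBubble n k μ₂ ξ₂ x ^ q) ξ₂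
  rw [finrank_euclideanSpace_fin] at hchange
  rw [hchange, ← hscale, mul_assoc]
  congr 1
  rw [← integral_const_mul, ← integral_const_mul]
  refine integral_congr_ae (ae_of_all _ fun y => ?_)
  dsimp only
  rw [stdBubble_add_smul_rpow hc hμ₁ hμ₁, stdBubble_add_smul_rpow hc hμ₂ hμ₁]
  simp only [div_self hμ₁.ne', one_rpow, one_pow, sub_self, smul_zero, sub_zero]
  ring

end Bubble

theorem stmt13_general (k n : ℕ) (hn : 2 * k < n) (p q : ℝ)
    (hq1 : 1 < q)
    (hpq : p + q = 2 * (n : ℝ) / ((n : ℝ) - 2 * k))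
    (hq : q < (n : ℝ) / ((n : ℝ) - 2 * k)) :
    ∃ C : ℝ, 0 < C ∧
      ∀ μ₁ μ₂ : ℝ, 0 < μ₁ → 0 < μ₂ → ∀ ξ₁ ξ₂ : EuclideanSpace ℝ (Fin n),
        (∫ x : EuclideanSpace ℝ (Fin n),
            stdBubble n k μ₁ ξ₁ x ^ p * stdBubble n k μ₂ ξ₂ x ^ q) ≤
          C * interact n k μ₁ μ₂ ξ₁ ξ₂ ^ q := by
  have hc := cnk_pos hn
  have hnk : (2 * k : ℝ) < n := by exact_mod_cast hn
  have hsum := half_sub_mul_add_half_sub_mul_eq hnk hpq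
  obtain ⟨C, hC, hcore⟩ := exists_integral_rpow_neg_mul_rpow_neg_le
    (volume : Measure (EuclideanSpace ℝ (Fin n)))
    (a := (n - 2 * k) / 2 * p) (b := (n - 2 * k) / 2 * q) (mul_pos (by linarith) (by linarith))
    (by rwa [finrank_euclideanSpace_fin])
    (by simpa using two_mul_half_sub_mul_lt hnk hq)
  refine ⟨C * cnk n k ^ ((n : ℝ) / 2), by positivity, fun μ₁ μ₂ hμ₁ hμ₂ ξ₁ ξ₂ => ?_⟩
  rw [integral_stdBubble_rpow_mul_stdBubble_rpow hc hsum hμ₁ hμ₂, interact_rpow_eq hc hμ₁ hμ₂,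
    mul_comm C, mul_assoc, mul_left_comm C]
  gcongr
  exact hcore _ _

theorem stmt13 (k n : ℕ) (hk : 1 ≤ k) (hn : 2 * k < n) (p q : ℝ)
    (hp1 : 1 < p) (hq1 : 1 < q)
    (hpq : p + q = 2 * (n : ℝ) / ((n : ℝ) - 2 * k))
    (hp : (n : ℝ) / ((n : ℝ) - 2 * k) < p)
    (hq : q < (n : ℝ) / ((n : ℝ) - 2 * k)) :
    ∃ C : ℝ, 0 < C ∧
      ∀ μ₁ μ₂ : ℝ, 0 < μ₁ → 0 < μ₂ → ∀ ξ₁ ξ₂ : EuclideanSpace ℝ (Fin n),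
        (∫ x : EuclideanSpace ℝ (Fin n),
            stdBubble n k μ₁ ξ₁ x ^ p * stdBubble n k μ₂ ξ₂ x ^ q) ≤
          C * interact n k μ₁ μ₂ ξ₁ ξ₂ ^ q :=
  stmt13_general k n hn p q hq1 hpq hq
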